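/- Assume N − r is odd, and let X be a Q×Q complex matrix satisfying h·X·hᵀ = X for all h in the hypergeometric group H_{q,d}. Set h₁ = h₀⁻¹·h∞⁻¹. Then for every index j with 2 ≤ j ≤ Q and every i with 2 ≤ i ≤ Q, one has (h₁)_{i,1}·X_{1,j} + (h₁)_{j,1}·X_{i,1} = 0. In particular, if (h₁)_{j,1} = (−1)^r(B_{Q−j+1} − A_{Q−j+1}) ≠ 0 for some j ≥ 2, then X_{i,1} = −((h₁)_{i,1}/(h₁)_{j,1})·X_{1,j} for all 2 ≤ i ≤ Q. -/

import Mathlib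

/-!
Because `N - r` is odd, the constant terms `A_Q = (-1)^r` and `B_Q = (-1)^(N+1)` coincide.
As the first row of `h∞` is `-A_Q e_Qᵀ` and `A_Q = ±1`, the matrices `h₀⁻¹` and `h∞`, which
differ only in their last column, satisfy `h₀⁻¹ = (1 + u e₁ᵀ) h∞` with
`u_p = A_Q (B_{Q-p+1} - A_{Q-p+1})` (so `u₁ = 0`; indices are 0-based in the code).
Thus `h₁ = 1 + u e₁ᵀ`, and `h₁ X h₁ᵀ = X` read at the entries `(1, j)` and `(i, j)` gives
`u_j X₁₁ = 0` and `u_i X_{1j} + u_j X_{i1} + u_i u_j X₁₁ = 0`.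
-/

open Polynomial Matrix

/-- The `Q × Q` integer companion-type matrix with ones on the subdiagonal,
last column `(-A Q, -A (Q-1), …, -A 1)ᵀ` from top to bottom, and zeros elsewhere. -/
def compMat (Q : ℕ) (A : ℕ → ℤ) : Matrix (Fin Q) (Fin Q) ℤ :=
  Matrix.of fun i j =>
    if (j : ℕ) + 1 = Q then -A (Q - (i : ℕ))
    else if (i : ℕ) = (j : ℕ) + 1 then 1 else 0

lemma eval_zero_prod_X_pow_sub_one {ι : Type*} [Fintype ι] (d : ι → ℕ) (hd : ∀ k, 0 < d k) :
    (∏ k, ((X : ℤ[X]) ^ d k - 1)).eval 0 = (-1) ^ Fintype.card ι := by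
  simp [eval_prod, zero_pow (hd _).ne']

lemma eval_zero_X_pow_add_sum {R : Type*} [CommRing R] {Q : ℕ} (hQ : 0 < Q) (A : ℕ → R) :
    (X ^ Q + ∑ i ∈ Finset.Icc 1 Q, C (A i) * X ^ (Q - i)).eval 0 = A Q := by
  have hQmem : Q ∈ Finset.Icc 1 Q := by simp [Nat.one_le_iff_ne_zero, hQ.ne']
  rw [eval_add, eval_finsetSum, Finset.sum_eq_single_of_mem Q hQmem]
  · simp [hQ.ne']
  · intro i hi hiQ
    have : 0 < Q - i := by grind
    simp [this.ne']

lemma eq_neg_one_pow_card_of_prod_X_pow_sub_one {ι : Type*} [Fintype ι] {Q : ℕ} (hQ : 0 < Q)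
    {d : ι → ℕ} (hd : ∀ k, 0 < d k) {A : ℕ → ℤ}
    (h : ∏ k, ((X : ℤ[X]) ^ d k - 1) = X ^ Q + ∑ i ∈ Finset.Icc 1 Q, C (A i) * X ^ (Q - i)) :
    A Q = (-1) ^ Fintype.card ι := by
  rw [← eval_zero_X_pow_add_sum hQ A, ← h, eval_zero_prod_X_pow_sub_one d hd]

lemma neg_one_pow_succ_eq_of_odd_sub {N r : ℕ} (h : Odd ((N : ℤ) - r)) :
    (-1 : ℤ) ^ (N + 1) = (-1) ^ r :=
  neg_one_pow_congr (by simpa [Int.odd_sub, Nat.even_add_one, parity_simps] using h)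

section Transvection

variable {n R : Type*} [DecidableEq n] [CommRing R]

lemma one_add_vecMulVec_conj_apply [Fintype n] (u : n → R) (z : n) (M : Matrix n n R) (i j : n) :
    ((1 + vecMulVec u (Pi.single z 1)) * M * (1 + vecMulVec u (Pi.single z 1))ᵀ :
      Matrix n n R) i j = M i j + u i * M z j + (M i z + u i * M z z) * u j := by
  simp [add_mul, mul_add, vecMulVec_mul, transpose_vecMulVec, mul_vecMulVec, vecMulVec_apply]

theorem mul_add_mul_eq_zero_of_conj_eq [Fintype n] {u : n → R} {z : n} (hu : u z = 0)
    {M : Matrix n n R}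
    (hM : (1 + vecMulVec u (Pi.single z 1)) * M * (1 + vecMulVec u (Pi.single z 1))ᵀ = M)
    (i j : n) : u i * M z j + u j * M i z = 0 := by
  have hij := congrFun₂ hM i j
  have hzj := congrFun₂ hM z j
  rw [one_add_vecMulVec_conj_apply] at hij hzj
  rw [hu] at hzj
  linear_combination hij - u i * hzj

lemma one_add_vecMulVec_apply_of_ne (u : n → R) {i z : n} (hi : i ≠ z) :
    (1 + vecMulVec u (Pi.single z 1) : Matrix n n R) i z = u i := by
  simp [vecMulVec_apply, one_apply, hi]

lemma map_one_add_vecMulVec {S : Type*} [CommRing S] (f : R →+* S) (u : n → R) (z : n) :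
    (1 + vecMulVec u (Pi.single z 1)).map f = 1 + vecMulVec (f ∘ u) (Pi.single z 1) := by
  ext i j
  simp [vecMulVec_apply, Pi.single_apply, one_apply, apply_ite f]

end Transvection

lemma compMat_eq_mul_compMat {Q : ℕ} (hQ : 0 < Q) {A : ℕ → ℤ} (B : ℕ → ℤ)
    (hA : A Q * A Q = 1) :
    compMat Q B = (1 + vecMulVec (fun p : Fin Q ↦ A Q * (B (Q - p) - A (Q - p)))
      (Pi.single ⟨0, hQ⟩ 1)) * compMat Q A := by
  ext p j
  simp only [compMat, of_apply, add_mul, one_mul, vecMulVec_mul, single_vecMul, of_row, tsub_zero,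
    Nat.right_eq_add, Nat.add_eq_zero_iff, one_ne_zero, and_false, ↓reduceIte, one_smul,
    Matrix.add_apply, vecMulVec_apply, mul_ite, mul_neg, mul_zero]
  split_ifs <;> grind

lemma compMat_mul_inv_compMat {Q : ℕ} (hQ : 0 < Q) {A : ℕ → ℤ} (B : ℕ → ℤ)
    (hA : A Q * A Q = 1) (hdet : IsUnit (compMat Q A).det) :
    compMat Q B * (compMat Q A)⁻¹
      = 1 + vecMulVec (fun p : Fin Q ↦ A Q * (B (Q - p) - A (Q - p))) (Pi.single ⟨0, hQ⟩ 1) := by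
  rw [compMat_eq_mul_compMat hQ B hA, mul_nonsing_inv_cancel_right _ _ hdet]

theorem invariant_first_column_odd_case_general
    (N r Q : ℕ) (hQ : 0 < Q) (q : Fin (N + 1) → ℕ) (d : Fin r → ℕ)
    (hq : ∀ ν, 0 < q ν) (hd : ∀ k, 0 < d k)
    (A B : ℕ → ℤ)
    (hA : ∏ k, ((X : ℤ[X]) ^ d k - 1)
      = X ^ Q + ∑ i ∈ Finset.Icc 1 Q, C (A i) * X ^ (Q - i))
    (hB : ∏ ν, ((X : ℤ[X]) ^ q ν - 1)
      = X ^ Q + ∑ i ∈ Finset.Icc 1 Q, C (B i) * X ^ (Q - i))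
    (ginf g0inv : GL (Fin Q) ℤ)
    (hginf : (ginf : Matrix (Fin Q) (Fin Q) ℤ) = compMat Q A)
    (hg0inv : (g0inv : Matrix (Fin Q) (Fin Q) ℤ) = compMat Q B)
    (hparity : Odd ((N : ℤ) - (r : ℤ)))
    (Xm : Matrix (Fin Q) (Fin Q) ℂ)
    (hXm : ∀ h ∈ Subgroup.closure ({ginf, g0inv} : Set (GL (Fin Q) ℤ)),
      ((h : Matrix (Fin Q) (Fin Q) ℤ).map (Int.cast : ℤ → ℂ)) * Xm
        * ((h : Matrix (Fin Q) (Fin Q) ℤ).map (Int.cast : ℤ → ℂ))ᵀ = Xm) :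
    (∀ i j : Fin Q, 1 ≤ (i : ℕ) → 1 ≤ (j : ℕ) →
      (((compMat Q B * (compMat Q A)⁻¹) i ⟨0, hQ⟩ : ℤ) : ℂ) * Xm ⟨0, hQ⟩ j
        + (((compMat Q B * (compMat Q A)⁻¹) j ⟨0, hQ⟩ : ℤ) : ℂ) * Xm i ⟨0, hQ⟩ = 0)
    ∧ (∀ j : Fin Q, 1 ≤ (j : ℕ) →
        (((compMat Q B * (compMat Q A)⁻¹) j ⟨0, hQ⟩ : ℤ) : ℂ) ≠ 0 →
        ∀ i : Fin Q, 1 ≤ (i : ℕ) →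
          Xm i ⟨0, hQ⟩ =
            -((((compMat Q B * (compMat Q A)⁻¹) i ⟨0, hQ⟩ : ℤ) : ℂ)
                / (((compMat Q B * (compMat Q A)⁻¹) j ⟨0, hQ⟩ : ℤ) : ℂ))
              * Xm ⟨0, hQ⟩ j) := by
  set z : Fin Q := ⟨0, hQ⟩
  set u : Fin Q → ℤ := fun p ↦ A Q * (B (Q - p) - A (Q - p))
  have hAQ : A Q = (-1) ^ r := by simpa using eq_neg_one_pow_card_of_prod_X_pow_sub_one hQ hd hA
  have hBQ : B Q = (-1) ^ (N + 1) := by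
    simpa using eq_neg_one_pow_card_of_prod_X_pow_sub_one hQ hq hB
  have hu : u z = 0 := by simp [u, z, hAQ, hBQ, neg_one_pow_succ_eq_of_odd_sub hparity]
  have h₁_eq : compMat Q B * (compMat Q A)⁻¹ = 1 + vecMulVec u (Pi.single z 1) :=
    compMat_mul_inv_compMat hQ B (by rw [hAQ, ← pow_add, Even.neg_one_pow ⟨r, rfl⟩])
      ((isUnit_iff_isUnit_det _).1 (hginf ▸ ginf.isUnit))
  have h₁_inv : (1 + vecMulVec (Int.castRingHom ℂ ∘ u) (Pi.single z 1)) * Xm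
      * (1 + vecMulVec (Int.castRingHom ℂ ∘ u) (Pi.single z 1))ᵀ = Xm := by
    have := hXm (g0inv * ginf⁻¹) (Subgroup.mul_mem _ (Subgroup.subset_closure (by simp))
      (Subgroup.inv_mem _ (Subgroup.subset_closure (by simp))))
    rw [Units.val_mul, coe_units_inv, hginf, hg0inv, h₁_eq] at this
    rwa [← map_one_add_vecMulVec]
  have hz : ∀ i : Fin Q, 1 ≤ (i : ℕ) → i ≠ z := fun i hi h ↦ by simp [h, z] at hi
  have hrel : ∀ i j : Fin Q, 1 ≤ (i : ℕ) → 1 ≤ (j : ℕ) →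
      (((compMat Q B * (compMat Q A)⁻¹) i z : ℤ) : ℂ) * Xm z j
        + (((compMat Q B * (compMat Q A)⁻¹) j z : ℤ) : ℂ) * Xm i z = 0 := by
    intro i j hi hj
    rw [h₁_eq, one_add_vecMulVec_apply_of_ne u (hz i hi),
      one_add_vecMulVec_apply_of_ne u (hz j hj)]
    exact mul_add_mul_eq_zero_of_conj_eq (by simp [hu]) h₁_inv i j
  refine ⟨hrel, fun j hj hne i hi ↦ ?_⟩
  field_simp
  linear_combination hrel i j hi hj

/-- If `N - r` is odd and `X` is invariant under the hypergeometric group `H_{q,d}`,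
then `(h₁)_{i,1}·X_{1,j} + (h₁)_{j,1}·X_{i,1} = 0` for all `2 ≤ i, j ≤ Q`,
where `h₁ = h₀⁻¹·h∞⁻¹`; in particular if `(h₁)_{j,1} ≠ 0` for some `j ≥ 2`, then
`X_{i,1} = -((h₁)_{i,1}/(h₁)_{j,1})·X_{1,j}` for all `2 ≤ i ≤ Q`. -/
theorem invariant_first_column_odd_case
    (N r Q : ℕ) (hQ : 0 < Q) (q : Fin (N + 1) → ℕ) (d : Fin r → ℕ)
    (hq : ∀ ν, 0 < q ν) (hd : ∀ k, 0 < d k)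
    (hQq : Q = ∑ ν, q ν) (hQd : Q = ∑ k, d k)
    (A B : ℕ → ℤ)
    (hA : ∏ k, ((X : ℤ[X]) ^ d k - 1)
      = X ^ Q + ∑ i ∈ Finset.Icc 1 Q, C (A i) * X ^ (Q - i))
    (hB : ∏ ν, ((X : ℤ[X]) ^ q ν - 1)
      = X ^ Q + ∑ i ∈ Finset.Icc 1 Q, C (B i) * X ^ (Q - i))
    (ginf g0inv : GL (Fin Q) ℤ)
    (hginf : (ginf : Matrix (Fin Q) (Fin Q) ℤ) = compMat Q A)
    (hg0inv : (g0inv : Matrix (Fin Q) (Fin Q) ℤ) = compMat Q B)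
    (hparity : Odd ((N : ℤ) - (r : ℤ)))
    (Xm : Matrix (Fin Q) (Fin Q) ℂ)
    (hXm : ∀ h ∈ Subgroup.closure ({ginf, g0inv} : Set (GL (Fin Q) ℤ)),
      ((h : Matrix (Fin Q) (Fin Q) ℤ).map (Int.cast : ℤ → ℂ)) * Xm
        * ((h : Matrix (Fin Q) (Fin Q) ℤ).map (Int.cast : ℤ → ℂ))ᵀ = Xm) :
    (∀ i j : Fin Q, 1 ≤ (i : ℕ) → 1 ≤ (j : ℕ) →
      (((compMat Q B * (compMat Q A)⁻¹) i ⟨0, hQ⟩ : ℤ) : ℂ) * Xm ⟨0, hQ⟩ j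
        + (((compMat Q B * (compMat Q A)⁻¹) j ⟨0, hQ⟩ : ℤ) : ℂ) * Xm i ⟨0, hQ⟩ = 0)
    ∧ (∀ j : Fin Q, 1 ≤ (j : ℕ) →
        (((compMat Q B * (compMat Q A)⁻¹) j ⟨0, hQ⟩ : ℤ) : ℂ) ≠ 0 →
        ∀ i : Fin Q, 1 ≤ (i : ℕ) →
          Xm i ⟨0, hQ⟩ =
            -((((compMat Q B * (compMat Q A)⁻¹) i ⟨0, hQ⟩ : ℤ) : ℂ)
                / (((compMat Q B * (compMat Q A)⁻¹) j ⟨0, hQ⟩ : ℤ) : ℂ))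
              * Xm ⟨0, hQ⟩ j) :=
  invariant_first_column_odd_case_general N r Q hQ q d hq hd A B hA hB ginf g0inv hginf hg0inv
    hparity Xm hXm
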